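/- Steiner symmetrization does not increase the moment of inertia: for every bounded measurable set A ⊆ ℝ^d and every unit vector u, μ(S_uA) ≤ μ(A). -/

import Mathlib

open MeasureTheory Metric Filter
open scoped symmDiff ENNReal

/-- The Steiner symmetral of `A` in direction `u`: the union over points `x` of the
hyperplane `u^⊥` of the closed segment on the line `l_u + x` centered at `x` whose length
is the one-dimensional outer Lebesgue measure of `A ∩ (l_u + x)` (empty if that
intersection is empty). -/
noncomputable def steinerSymmetral (d : ℕ) (u : EuclideanSpace ℝ (Fin d))
    (A : Set (EuclideanSpace ℝ (Fin d))) : Set (EuclideanSpace ℝ (Fin d)) :=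
  {z | {t : ℝ | (z - (inner ℝ z u : ℝ) • u) + t • u ∈ A}.Nonempty ∧
    ENNReal.ofReal (2 * |(inner ℝ z u : ℝ)|) ≤
      volume {t : ℝ | (z - (inner ℝ z u : ℝ) • u) + t • u ∈ A}}

/-- The (central) moment of inertia of a set: `μ(A) = ∫_A ‖z‖² dλ_d(z)`. -/
noncomputable def inertia (d : ℕ) (A : Set (EuclideanSpace ℝ (Fin d))) : ℝ :=
  ∫ z in A, ‖z‖ ^ 2


lemma setEqIcc (m : ℝ≥0∞) (hm : m ≠ ∞) :
    {t : ℝ | ENNReal.ofReal (2*|t|) ≤ m} = Set.Icc (-(m.toReal/2)) (m.toReal/2) := by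
  ext t
  simp only [Set.mem_setOf_eq, Set.mem_Icc, ← abs_le]
  rw [ENNReal.ofReal_le_iff_le_toReal hm]
  constructor <;> intro h <;> [linarith [abs_nonneg t]; linarith]

lemma volEq (m : ℝ≥0∞) (hm : m ≠ ∞) :
    volume {t : ℝ | ENNReal.ofReal (2*|t|) ≤ m} = m := by
  rw [setEqIcc m hm, Real.volume_Icc,
    show m.toReal/2 - -(m.toReal/2) = m.toReal by ring, ENNReal.ofReal_toReal hm]

lemma oneDim (s : Set ℝ) (hs : MeasurableSet s) (hfin : volume s ≠ ∞) :
    ∫⁻ t in {t : ℝ | ENNReal.ofReal (2*|t|) ≤ volume s}, ENNReal.ofReal (t^2)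
      ≤ ∫⁻ t in s, ENNReal.ofReal (t^2) := by
  set m := volume s with hm
  set r := m.toReal / 2 with hr
  have hr0 : 0 ≤ r := by positivity
  have hIcc : {t : ℝ | ENNReal.ofReal (2*|t|) ≤ m} = Set.Icc (-r) r := setEqIcc m hfin
  rw [hIcc]
  set I := Set.Icc (-r) r with hI
  have hImeas : MeasurableSet I := measurableSet_Icc
  have hvolI : volume I = m := by rw [hI, ← setEqIcc m hfin]; exact volEq m hfin
  have hsplitI : ∫⁻ t in I, ENNReal.ofReal (t^2)
      = (∫⁻ t in I ∩ s, ENNReal.ofReal (t^2)) + ∫⁻ t in I \ s, ENNReal.ofReal (t^2) := by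
    have h := lintegral_union (μ := volume) (f := fun t => ENNReal.ofReal (t^2))
      (hImeas.diff hs) (Disjoint.symm (Set.disjoint_sdiff_inter (s := I) (t := s)))
    rw [Set.inter_union_diff] at h; simpa using h
  have hsplits : ∫⁻ t in s, ENNReal.ofReal (t^2)
      = (∫⁻ t in I ∩ s, ENNReal.ofReal (t^2)) + ∫⁻ t in s \ I, ENNReal.ofReal (t^2) := by
    have h := lintegral_union (μ := volume) (f := fun t => ENNReal.ofReal (t^2))
      (hs.diff hImeas) (Disjoint.symm (Set.disjoint_sdiff_inter (s := s) (t := I)))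
    rw [Set.inter_union_diff] at h
    rw [Set.inter_comm] at h; simpa using h
  rw [hsplitI, hsplits]
  refine add_le_add le_rfl ?_
  have hvd : volume (I \ s) = volume (s \ I) := by
    have h1 : volume (I \ s) + volume (I ∩ s) = m := by
      rw [measure_diff_add_inter I hs, hvolI]
    have h2 : volume (s \ I) + volume (s ∩ I) = m := by
      rw [measure_diff_add_inter s hImeas, hm]
    rw [Set.inter_comm] at h2
    have hfin' : volume (I ∩ s) ≠ ∞ :=
      ne_top_of_le_ne_top hfin (measure_mono Set.inter_subset_right)
    exact WithTop.add_right_cancel hfin' (h1.trans h2.symm)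
  calc ∫⁻ t in I \ s, ENNReal.ofReal (t^2)
      ≤ ∫⁻ _t in I \ s, ENNReal.ofReal (r^2) := by
        refine setLIntegral_mono measurable_const fun t ht => ?_
        refine ENNReal.ofReal_le_ofReal ?_
        have h1 : |t| ≤ r := abs_le.mpr ⟨ht.1.1, ht.1.2⟩
        calc t^2 = |t|^2 := (sq_abs t).symm
          _ ≤ r^2 := by nlinarith [abs_nonneg t]
    _ = ENNReal.ofReal (r^2) * volume (I \ s) := setLIntegral_const _ _
    _ = ENNReal.ofReal (r^2) * volume (s \ I) := by rw [hvd]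
    _ = ∫⁻ _t in s \ I, ENNReal.ofReal (r^2) := (setLIntegral_const _ _).symm
    _ ≤ ∫⁻ t in s \ I, ENNReal.ofReal (t^2) := by
        refine setLIntegral_mono (by fun_prop) fun t ht => ?_
        refine ENNReal.ofReal_le_ofReal ?_
        have h1 : r < |t| := by
          by_contra hc
          push_neg at hc
          exact ht.2 ⟨neg_le_of_abs_le hc, le_of_abs_le hc⟩
        calc r^2 ≤ |t|^2 := by nlinarith
          _ = t^2 := sq_abs t

lemma oneDim' (s : Set ℝ) (hs : MeasurableSet s) (hfin : volume s ≠ ∞) (c : ℝ≥0∞) :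
    ∫⁻ t in {t : ℝ | ENNReal.ofReal (2*|t|) ≤ volume s}, (ENNReal.ofReal (t^2) + c)
      ≤ ∫⁻ t in s, (ENNReal.ofReal (t^2) + c) := by
  rw [lintegral_add_right _ measurable_const, lintegral_add_right _ measurable_const,
    setLIntegral_const, setLIntegral_const, volEq _ hfin]
  exact add_le_add (oneDim s hs hfin) le_rfl

lemma prodLem {Y : Type*} [MeasurableSpace Y] (ν : Measure Y) [SigmaFinite ν]
    (A : Set (ℝ × Y)) (hA : MeasurableSet A)
    (hfin : ∀ y, volume {t : ℝ | (t,y) ∈ A} ≠ ∞)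
    (h : Y → ℝ≥0∞) (hh : Measurable h) :
    ∫⁻ p in {p : ℝ × Y | ENNReal.ofReal (2*|p.1|) ≤ volume {t : ℝ | (t,p.2) ∈ A}},
        (ENNReal.ofReal (p.1^2) + h p.2) ∂((volume : Measure ℝ).prod ν)
    ≤ ∫⁻ p in A, (ENNReal.ofReal (p.1^2) + h p.2) ∂((volume : Measure ℝ).prod ν) := by
  set mY : Y → ℝ≥0∞ := fun y => volume {t : ℝ | (t,y) ∈ A} with hmY
  have hmYmeas : Measurable mY := measurable_measure_prodMk_right hA
  set S : Set (ℝ × Y) := {p : ℝ × Y | ENNReal.ofReal (2*|p.1|) ≤ mY p.2} with hSdef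
  have hSmeas : MeasurableSet S := by
    refine measurableSet_le ?_ (hmYmeas.comp measurable_snd)
    exact (ENNReal.measurable_ofReal.comp (by fun_prop))
  set F : ℝ × Y → ℝ≥0∞ := fun p => ENNReal.ofReal (p.1^2) + h p.2 with hFdef
  have hFmeas : Measurable F := by
    exact (ENNReal.measurable_ofReal.comp (by fun_prop : Measurable fun p : ℝ × Y => p.1^2)).add
      (hh.comp measurable_snd)
  have key : ∀ y : Y,
      (∫⁻ t, S.indicator F (t, y)) ≤ ∫⁻ t, A.indicator F (t, y) := by
    intro y
    have hAy : MeasurableSet {t : ℝ | (t,y) ∈ A} := hA.preimage measurable_prodMk_right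
    have e1 : (fun t => S.indicator F (t, y))
        = fun t => ({t : ℝ | ENNReal.ofReal (2*|t|) ≤ mY y}.indicator
            (fun t => ENNReal.ofReal (t^2) + h y)) t := by
      funext t
      by_cases ht : ENNReal.ofReal (2*|t|) ≤ mY y
      · rw [Set.indicator_of_mem (by exact ht : (t,y) ∈ S),
          Set.indicator_of_mem (by exact ht)]
      · rw [Set.indicator_of_notMem (by exact ht : (t,y) ∉ S),
          Set.indicator_of_notMem (by exact ht)]
    have e2 : (fun t => A.indicator F (t, y))
        = fun t => ({t : ℝ | (t,y) ∈ A}.indicator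
            (fun t => ENNReal.ofReal (t^2) + h y)) t := by
      funext t
      by_cases ht : (t, y) ∈ A
      · rw [Set.indicator_of_mem ht, Set.indicator_of_mem (by exact ht)]
      · rw [Set.indicator_of_notMem ht, Set.indicator_of_notMem (by exact ht)]
    rw [e1, e2, lintegral_indicator, lintegral_indicator hAy]
    · exact oneDim' _ hAy (hfin y) (h y)
    · exact measurableSet_le (ENNReal.measurable_ofReal.comp (by fun_prop)) measurable_const
  calc ∫⁻ p in S, F p ∂((volume : Measure ℝ).prod ν)
      = ∫⁻ p, S.indicator F p ∂((volume : Measure ℝ).prod ν) :=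
        (lintegral_indicator hSmeas F).symm
    _ = ∫⁻ y, (∫⁻ t, S.indicator F (t, y)) ∂ν :=
        lintegral_prod_symm' _ (hFmeas.indicator hSmeas)
    _ ≤ ∫⁻ y, (∫⁻ t, A.indicator F (t, y)) ∂ν := lintegral_mono key
    _ = ∫⁻ p, A.indicator F p ∂((volume : Measure ℝ).prod ν) :=
        (lintegral_prod_symm' _ (hFmeas.indicator hA)).symm
    _ = ∫⁻ p in A, F p ∂((volume : Measure ℝ).prod ν) := lintegral_indicator hA F

/-- Steiner symmetrization does not increase the moment of inertia:
`μ(S_uA) ≤ μ(A)` for every bounded measurable `A` and unit vector `u`. -/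
theorem inertia_steinerSymmetral_le (d : ℕ)
    (A : Set (EuclideanSpace ℝ (Fin d))) (hA : MeasurableSet A)
    (hAb : Bornology.IsBounded A)
    (u : EuclideanSpace ℝ (Fin d)) (hu : ‖u‖ = 1) :
    inertia d (steinerSymmetral d u A) ≤ inertia d A := by
  -- d ≠ 0
  have hd : d ≠ 0 := by
    rintro rfl
    have : u = 0 := Subsingleton.elim u 0
    rw [this, norm_zero] at hu
    exact zero_ne_one hu
  obtain ⟨n, rfl⟩ := Nat.exists_eq_succ_of_ne_zero hd
  -- orthonormal basis with b 0 = u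
  have card : Module.finrank ℝ (EuclideanSpace ℝ (Fin (n+1))) = Fintype.card (Fin (n+1)) := by
    simp [finrank_euclideanSpace]
  have horth : Orthonormal ℝ (({0} : Set (Fin (n+1))).restrict (fun _ => u)) := by
    refine ⟨fun i => hu, fun i j hij => absurd ?_ hij⟩
    apply Subtype.ext
    rcases i with ⟨i, hi⟩; rcases j with ⟨j, hj⟩
    simp only [Set.mem_singleton_iff] at hi hj
    simp [hi, hj]
  obtain ⟨b, hb⟩ := horth.exists_orthonormalBasis_extension_of_card_eq card
  have hb0 : b 0 = u := hb 0 rfl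
  -- the measurable equivalence to ℝ × (Fin n → ℝ)
  set ν : Measure (Fin n → ℝ) := volume with hν
  set Φe : EuclideanSpace ℝ (Fin (n+1)) ≃ᵐ (ℝ × (Fin n → ℝ)) :=
    (b.repr.toHomeomorph.toMeasurableEquiv).trans
      ((MeasurableEquiv.toLp 2 (Fin (n+1) → ℝ)).symm.trans
        (MeasurableEquiv.piFinSuccAbove (fun _ => ℝ) 0)) with hΦe
  have mpΦ : MeasurePreserving Φe volume (volume.prod ν) := by
    have mp1 := b.measurePreserving_repr
    have mp2 := EuclideanSpace.volume_preserving_symm_measurableEquiv_toLp (Fin (n+1))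
    have mp3 := measurePreserving_piFinSuccAbove (fun _ : Fin (n+1) => (volume : Measure ℝ)) 0
    rw [← volume_pi] at mp3
    have hνeq : (Measure.pi fun _ : Fin n => (volume : Measure ℝ)) = ν := volume_pi.symm
    rw [hνeq] at mp3
    exact mp3.comp (mp2.comp mp1)
  have Φapp : ∀ z : EuclideanSpace ℝ (Fin (n+1)),
      Φe z = (b.repr z 0, fun j => b.repr z (Fin.succAbove 0 j)) := by
    intro z
    rfl
  -- coordinate facts
  have hib : ∀ i j : Fin (n+1), (inner ℝ (b i) (b j) : ℝ) = if i = j then 1 else 0 :=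
    orthonormal_iff_ite.mp b.orthonormal
  have hrepr0 : ∀ z : EuclideanSpace ℝ (Fin (n+1)), b.repr z 0 = (inner ℝ z u : ℝ) := by
    intro z
    rw [b.repr_apply_apply, hb0, real_inner_comm]
  have hcoord : ∀ (w : EuclideanSpace ℝ (Fin (n+1))) (c t : ℝ) (i : Fin (n+1)),
      b.repr (w - c • u + t • u) i = b.repr w i + (t - c) * (inner ℝ (b i) u : ℝ) := by
    intro w c t i
    rw [b.repr_apply_apply, b.repr_apply_apply, inner_add_right, inner_sub_right,
      real_inner_smul_right, real_inner_smul_right]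
    ring
  have hbiu : ∀ i : Fin (n+1), (inner ℝ (b i) u : ℝ) = if i = 0 then 1 else 0 := by
    intro i
    rw [← hb0]
    exact hib i 0
  have factΦ : ∀ (z : EuclideanSpace ℝ (Fin (n+1))) (t : ℝ),
      Φe ((z - (inner ℝ z u : ℝ) • u) + t • u) = (t, (Φe z).2) := by
    intro z t
    rw [Φapp, Φapp]
    refine Prod.ext ?_ ?_
    · show b.repr (z - (inner ℝ z u : ℝ) • u + t • u) 0 = t
      rw [hcoord, hbiu, if_pos rfl, hrepr0]
      ring
    · show (fun j => b.repr (z - (inner ℝ z u : ℝ) • u + t • u) (Fin.succAbove 0 j))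
        = fun j => b.repr z (Fin.succAbove 0 j)
      funext j
      rw [hcoord, hbiu, if_neg, mul_zero, add_zero]
      rw [Fin.succAbove_zero]
      exact Fin.succ_ne_zero j
  have hnorm : ∀ z : EuclideanSpace ℝ (Fin (n+1)),
      ‖z‖^2 = (b.repr z 0)^2 + ∑ j : Fin n, (b.repr z (Fin.succAbove 0 j))^2 := by
    intro z
    have h1 : ‖z‖ = ‖b.repr z‖ := (b.repr.norm_map z).symm
    rw [h1, EuclideanSpace.norm_eq]
    rw [Real.sq_sqrt (by positivity)]
    simp only [Real.norm_eq_abs, sq_abs]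
    rw [Fin.sum_univ_succ]
    congr 1
  -- transfer the set A
  set A'' : Set (ℝ × (Fin n → ℝ)) := Φe.symm ⁻¹' A with hA''def
  have hA''meas : MeasurableSet A'' := Φe.symm.measurable hA
  have hApre : Φe ⁻¹' A'' = A := by
    ext z; simp [hA''def]
  have hfiber : ∀ z : EuclideanSpace ℝ (Fin (n+1)),
      {t : ℝ | (z - (inner ℝ z u : ℝ) • u) + t • u ∈ A} = {t : ℝ | (t, (Φe z).2) ∈ A''} := by
    intro z
    ext t
    simp only [Set.mem_setOf_eq, hA''def, Set.mem_preimage]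
    rw [← factΦ z t, MeasurableEquiv.symm_apply_apply]
  obtain ⟨R, hR⟩ := hAb.subset_closedBall 0
  have mfin : ∀ y : Fin n → ℝ, volume {t : ℝ | (t, y) ∈ A''} ≠ ∞ := by
    intro y
    have hsub : {t : ℝ | (t, y) ∈ A''} ⊆ Set.Icc (-R) R := by
      intro t ht
      have hz : Φe.symm (t, y) ∈ A := ht
      have hn : ‖Φe.symm (t, y)‖ ≤ R := by
        simpa [Metric.mem_closedBall, dist_zero_right] using hR hz
      have h := Φapp (Φe.symm (t, y))
      rw [MeasurableEquiv.apply_symm_apply] at h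
      have h0 : b.repr (Φe.symm (t, y)) 0 = t := (congrArg Prod.fst h).symm
      have habs : |t| ≤ R := by
        rw [← h0]
        calc |b.repr (Φe.symm (t, y)) 0|
            = |(inner ℝ (b 0) (Φe.symm (t, y)) : ℝ)| := by rw [b.repr_apply_apply]
          _ ≤ ‖b 0‖ * ‖Φe.symm (t, y)‖ := abs_real_inner_le_norm _ _
          _ = ‖Φe.symm (t, y)‖ := by rw [hb0, hu, one_mul]
          _ ≤ R := hn
      exact Set.mem_Icc.mpr (abs_le.mp habs)
    refine ne_top_of_le_ne_top ?_ (measure_mono hsub)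
    rw [Real.volume_Icc]; exact ENNReal.ofReal_ne_top
  set S'' : Set (ℝ × (Fin n → ℝ)) :=
    {p | ENNReal.ofReal (2*|p.1|) ≤ volume {t : ℝ | (t, p.2) ∈ A''}} with hS''def
  have hfst : ∀ z : EuclideanSpace ℝ (Fin (n+1)), (Φe z).1 = (inner ℝ z u : ℝ) := by
    intro z
    rw [Φapp]; exact hrepr0 z
  have hSpre : Φe ⁻¹' S'' = {z : EuclideanSpace ℝ (Fin (n+1)) |
      ENNReal.ofReal (2 * |(inner ℝ z u : ℝ)|) ≤
        volume {t : ℝ | (z - (inner ℝ z u : ℝ) • u) + t • u ∈ A}} := by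
    ext z
    simp only [Set.mem_preimage, hS''def, Set.mem_setOf_eq]
    rw [hfiber z, hfst z]
  have hsub1 : steinerSymmetral (n+1) u A ⊆ Φe ⁻¹' S'' := by
    intro z hz
    rw [hSpre]; exact hz.2
  have hsub2 : Φe ⁻¹' S'' \ steinerSymmetral (n+1) u A
      ⊆ {z : EuclideanSpace ℝ (Fin (n+1)) | (inner ℝ z u : ℝ) = 0} := by
    intro z hz
    obtain ⟨hz1, hz2⟩ := hz
    rw [hSpre] at hz1
    simp only [Set.mem_setOf_eq] at hz1 ⊢
    by_contra hne
    apply hz2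
    refine ⟨?_, hz1⟩
    rcases Set.eq_empty_or_nonempty
        {t : ℝ | (z - (inner ℝ z u : ℝ) • u) + t • u ∈ A} with he | hne'
    · exfalso
      rw [he] at hz1
      rw [measure_empty, nonpos_iff_eq_zero, ENNReal.ofReal_eq_zero] at hz1
      have h2 := abs_nonneg (inner ℝ z u : ℝ)
      have h3 : |(inner ℝ z u : ℝ)| = 0 := by linarith
      exact hne (abs_eq_zero.mp h3)
    · exact hne'
  have hnull : volume {z : EuclideanSpace ℝ (Fin (n+1)) | (inner ℝ z u : ℝ) = 0} = 0 := by
    have heq : {z : EuclideanSpace ℝ (Fin (n+1)) | (inner ℝ z u : ℝ) = 0}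
        = Φe ⁻¹' ({(0:ℝ)} ×ˢ (Set.univ : Set (Fin n → ℝ))) := by
      ext z
      simp only [Set.mem_setOf_eq, Set.mem_preimage, Set.mem_prod, Set.mem_singleton_iff,
        Set.mem_univ, and_true]
      rw [hfst z]
    rw [heq, mpΦ.measure_preimage
      ((measurableSet_singleton (0:ℝ)).prod MeasurableSet.univ).nullMeasurableSet]
    rw [Measure.prod_prod, Real.volume_singleton, zero_mul]
  have haeq : steinerSymmetral (n+1) u A =ᵐ[volume] (Φe ⁻¹' S'') := by
    rw [MeasureTheory.ae_eq_set]
    constructor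
    · rw [Set.diff_eq_empty.mpr hsub1]; exact measure_empty
    · exact measure_mono_null hsub2 hnull
  set F : ℝ × (Fin n → ℝ) → ℝ≥0∞ :=
    fun p => ENNReal.ofReal (p.1^2) + ENNReal.ofReal (∑ j, (p.2 j)^2) with hF
  have hFcomp : ∀ z : EuclideanSpace ℝ (Fin (n+1)),
      F (Φe z) = ENNReal.ofReal (‖z‖^2) := by
    intro z
    rw [hF]
    show ENNReal.ofReal ((Φe z).1^2) + ENNReal.ofReal (∑ j, ((Φe z).2 j)^2)
      = ENNReal.ofReal (‖z‖^2)
    rw [← ENNReal.ofReal_add (by positivity) (by positivity), hnorm z, Φapp]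
  have hmain : (∫⁻ z in Φe ⁻¹' S'', ENNReal.ofReal (‖z‖^2))
      ≤ ∫⁻ z in A, ENNReal.ofReal (‖z‖^2) := by
    have e1 : (∫⁻ z in Φe ⁻¹' S'', ENNReal.ofReal (‖z‖^2))
        = ∫⁻ p in S'', F p ∂((volume : Measure ℝ).prod ν) := by
      rw [← mpΦ.setLIntegral_comp_preimage_emb Φe.measurableEmbedding F S'']
      exact lintegral_congr fun z => (hFcomp z).symm
    have e2 : (∫⁻ z in A, ENNReal.ofReal (‖z‖^2))
        = ∫⁻ p in A'', F p ∂((volume : Measure ℝ).prod ν) := by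
      rw [← mpΦ.setLIntegral_comp_preimage_emb Φe.measurableEmbedding F A'', hApre]
      exact lintegral_congr fun z => (hFcomp z).symm
    rw [e1, e2]
    have hhm : Measurable fun y : Fin n → ℝ => ENNReal.ofReal (∑ j, (y j)^2) := by
      fun_prop
    exact prodLem ν A'' hA''meas mfin _ hhm
  have hfinA : (∫⁻ z in A, ENNReal.ofReal (‖z‖^2)) ≠ ∞ := by
    have hb' : ∀ z ∈ A, ENNReal.ofReal (‖z‖^2) ≤ ENNReal.ofReal (R^2) := by
      intro z hz
      refine ENNReal.ofReal_le_ofReal ?_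
      have h1 : ‖z‖ ≤ R := by
        simpa [Metric.mem_closedBall, dist_zero_right] using hR hz
      nlinarith [norm_nonneg z]
    have hle : (∫⁻ z in A, ENNReal.ofReal (‖z‖^2)) ≤ ENNReal.ofReal (R^2) * volume A := by
      calc (∫⁻ z in A, ENNReal.ofReal (‖z‖^2))
          ≤ ∫⁻ _z in A, ENNReal.ofReal (R^2) := setLIntegral_mono measurable_const hb'
        _ = ENNReal.ofReal (R^2) * volume A := setLIntegral_const _ _
    exact ne_top_of_le_ne_top
      (ENNReal.mul_ne_top ENNReal.ofReal_ne_top hAb.measure_lt_top.ne) hle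
  have hconv : ∀ B : Set (EuclideanSpace ℝ (Fin (n+1))),
      (∫ z in B, ‖z‖^2) = (∫⁻ z in B, ENNReal.ofReal (‖z‖^2)).toReal := by
    intro B
    rw [integral_eq_lintegral_of_nonneg_ae (f := fun z => ‖z‖^2)
      (Filter.Eventually.of_forall fun z => by positivity)
      ((continuous_norm.pow 2).aestronglyMeasurable)]
  have hres : volume.restrict (steinerSymmetral (n+1) u A)
      = volume.restrict (Φe ⁻¹' S'') := Measure.restrict_congr_set haeq
  show (∫ z in steinerSymmetral (n+1) u A, ‖z‖^2) ≤ ∫ z in A, ‖z‖^2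
  rw [show (∫ z in steinerSymmetral (n+1) u A, ‖z‖^2 : ℝ)
      = ∫ z in Φe ⁻¹' S'', ‖z‖^2 by rw [setIntegral_congr_set haeq]]
  rw [hconv, hconv]
  exact ENNReal.toReal_mono hfinA hmain
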